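/- For every positive integer x, σ_α(x) = ∑_{d=1}^{x} H_{⌊x/d⌋}^{(1-α)} · d^{α-1} · μ(d/gcd(d,x)) · φ(d)/φ(d/gcd(d,x)). -/

import Mathlib

/-!
Expanding `H_{⌊x/d⌋}^{(1-α)} d^{α-1} = ∑_{k ≤ x/d} (dk)^{α-1}` and collecting the terms by
`n = dk ≤ x`, the right-hand side becomes `∑_{n ≤ x} n^{α-1} ∑_{d ∣ n} c_d(x)`. Hölder's formula
for the Ramanujan sum `c_d(x)` is multiplicative in `d`, so `∑_{d ∣ n} c_d(x) = n·[n ∣ x]` need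
only be checked at `n = p^k`. There `c_{p^i}(x) = φ(p^i)` as long as `p^i ∣ x`, summing to `p^i`;
the first exponent `a + 1` with `p^{a+1} ∤ x` contributes `-p^a`, and all higher ones vanish.
-/

/-- Generalized harmonic number `H_n^{(r)} = ∑_{k=1}^n k^{-r}` with complex order. -/
noncomputable def genHarmonic (n : ℕ) (r : ℂ) : ℂ :=
  ∑ k ∈ Finset.Icc 1 n, (k : ℂ) ^ (-r)

open Finset ArithmeticFunction
open scoped ArithmeticFunction.Moebius ArithmeticFunction.zeta Nat

theorem Nat.gcd_prime_pow_eq_of_dvd_of_not_dvd {p j k x : ℕ} (hp : p.Prime) (hj : p ^ j ∣ x)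
    (hj' : ¬ p ^ (j + 1) ∣ x) (hjk : j ≤ k) : Nat.gcd (p ^ k) x = p ^ j := by
  obtain ⟨m, rfl⟩ := hj
  have hpm : ¬ p ∣ m := fun h => hj' (by rw [pow_succ]; exact mul_dvd_mul_left _ h)
  rw [← Nat.add_sub_cancel' hjk, pow_add, Nat.gcd_mul_left,
    ((hp.coprime_iff_not_dvd.mpr hpm).pow_left _).gcd_eq_one, mul_one]

theorem Nat.sum_Icc_filter_dvd {M : Type*} [AddCommMonoid M] {d : ℕ} (hd : 0 < d) (x : ℕ)
    (g : ℕ → M) : ∑ n ∈ Icc 1 x with d ∣ n, g n = ∑ k ∈ Icc 1 (x / d), g (d * k) := by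
  symm
  refine sum_nbij' (d * ·) (· / d) (fun k hk => ?_) (fun n hn => ?_) (fun k _ => ?_)
    (fun n hn => ?_) (fun _ _ => rfl)
  · simp only [mem_Icc, mem_filter] at hk ⊢
    refine ⟨⟨?_, ?_⟩, dvd_mul_right d k⟩
    · exact Nat.mul_pos hd hk.1
    · rw [mul_comm]; exact (Nat.le_div_iff_mul_le hd).mp hk.2
  · simp only [mem_Icc, mem_filter] at hn ⊢
    exact ⟨(Nat.one_le_div_iff hd).mpr (Nat.le_of_dvd (by omega) hn.2),
      Nat.div_le_div_right hn.1.2⟩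
  · simp [Nat.mul_div_cancel_left _ hd]
  · simp only [mem_filter] at hn
    exact Nat.mul_div_cancel' hn.2

theorem Nat.sum_Icc_sum_divisors {M : Type*} [AddCommMonoid M] (x : ℕ) (f : ℕ → ℕ → M) :
    ∑ n ∈ Icc 1 x, ∑ d ∈ n.divisors, f d n = ∑ d ∈ Icc 1 x, ∑ k ∈ Icc 1 (x / d), f d (d * k) := by
  rw [sum_comm' (t' := Icc 1 x) (s' := fun d => {n ∈ Icc 1 x | d ∣ n})]
  · exact sum_congr rfl fun d hd => Nat.sum_Icc_filter_dvd (by simp at hd; omega) x (f d)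
  · intro n d
    simp only [mem_Icc, Nat.mem_divisors, mem_filter]
    constructor
    · rintro ⟨hn, hdn, -⟩
      have := Nat.le_of_dvd (by omega) hdn
      have := Nat.pos_of_dvd_of_pos hdn (by omega)
      omega
    · rintro ⟨hn, -, hdn⟩
      omega

section RamanujanSum

variable (K : Type*) [Field K]

/-- The Ramanujan sum `c_d(x)`, given by Hölder's formula rather than as a sum of roots of unity. -/
noncomputable def ramanujanSum (x : ℕ) : ArithmeticFunction K :=
  ⟨fun d => (μ (d / d.gcd x) : K) * ((φ d : K) / (φ (d / d.gcd x) : K)), by simp⟩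

noncomputable def idOnDivisors (x : ℕ) : ArithmeticFunction K :=
  ⟨fun n => if n ∣ x then (n : K) else 0, by simp⟩

variable {K}

theorem ramanujanSum_apply (x d : ℕ) : ramanujanSum K x d =
    (μ (d / d.gcd x) : K) * ((φ d : K) / (φ (d / d.gcd x) : K)) := rfl

theorem isMultiplicative_ramanujanSum (x : ℕ) : (ramanujanSum K x).IsMultiplicative := by
  refine ⟨by simp [ramanujanSum_apply], fun {m n} hmn => ?_⟩
  have hgcd : (m * n).gcd x = m.gcd x * n.gcd x := by
    rw [Nat.gcd_comm, hmn.gcd_mul x, Nat.gcd_comm x, Nat.gcd_comm x]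
  have hdiv : m * n / (m.gcd x * n.gcd x) = m / m.gcd x * (n / n.gcd x) :=
    (Nat.div_mul_div_comm (Nat.gcd_dvd_left m x) (Nat.gcd_dvd_left n x)).symm
  have hcop : (m / m.gcd x).Coprime (n / n.gcd x) :=
    hmn.of_dvd (Nat.div_dvd_of_dvd (Nat.gcd_dvd_left m x))
      (Nat.div_dvd_of_dvd (Nat.gcd_dvd_left n x))
  simp only [ramanujanSum_apply, hgcd, hdiv, isMultiplicative_moebius.map_mul_of_coprime hcop,
    Nat.totient_mul hmn, Nat.totient_mul hcop]
  push_cast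
  ring

theorem ramanujanSum_of_dvd {x d : ℕ} (h : d ∣ x) : ramanujanSum K x d = φ d := by
  rcases d.eq_zero_or_pos with rfl | hd
  · simp
  · simp [ramanujanSum_apply, Nat.gcd_eq_left h, Nat.div_self hd]

theorem idOnDivisors_apply (x n : ℕ) : idOnDivisors K x n = if n ∣ x then (n : K) else 0 := rfl

theorem isMultiplicative_idOnDivisors (x : ℕ) : (idOnDivisors K x).IsMultiplicative := by
  refine ⟨by simp [idOnDivisors_apply], fun {m n} hmn => ?_⟩
  have hdvd : m * n ∣ x ↔ m ∣ x ∧ n ∣ x :=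
    ⟨fun h => ⟨dvd_of_mul_right_dvd h, dvd_of_mul_left_dvd h⟩,
      fun h => hmn.mul_dvd_of_dvd_of_dvd h.1 h.2⟩
  simp only [idOnDivisors_apply, hdvd, Nat.cast_mul]
  by_cases hm : m ∣ x <;> simp [hm]

theorem ramanujanSum_prime_pow_succ_of_dvd_of_not_dvd [CharZero K] {p k x : ℕ} (hp : p.Prime)
    (hk : p ^ k ∣ x) (hk' : ¬ p ^ (k + 1) ∣ x) : ramanujanSum K x (p ^ (k + 1)) = -(p : K) ^ k := by
  have hp1 : ((p - 1 : ℕ) : K) ≠ 0 := Nat.cast_ne_zero.mpr (Nat.sub_ne_zero_of_lt hp.one_lt)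
  rw [ramanujanSum_apply, Nat.gcd_prime_pow_eq_of_dvd_of_not_dvd hp hk hk' (k.le_add_right 1),
    Nat.pow_div (k.le_add_right 1) hp.pos, Nat.add_sub_cancel_left, pow_one, moebius_apply_prime hp,
    Nat.totient_prime_pow_succ hp, Nat.totient_prime hp, Nat.cast_mul, mul_div_cancel_right₀ _ hp1]
  push_cast
  ring

theorem ramanujanSum_prime_pow_succ_of_not_dvd {p k x : ℕ} (hp : p.Prime) (hk : ¬ p ^ k ∣ x) :
    ramanujanSum K x (p ^ (k + 1)) = 0 := by
  have hx : x ≠ 0 := by rintro rfl; exact hk (dvd_zero _)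
  have ha : p ^ x.factorization p ∣ x := Nat.ordProj_dvd x p
  have hak : x.factorization p < k := by
    by_contra! h
    exact hk ((pow_dvd_pow p h).trans ha)
  rw [ramanujanSum_apply, Nat.gcd_prime_pow_eq_of_dvd_of_not_dvd hp ha
    (Nat.pow_succ_factorization_not_dvd hx hp) (by omega), Nat.pow_div (by omega) hp.pos,
    moebius_apply_prime_pow hp (by omega), if_neg (by omega)]
  simp

theorem sum_range_ramanujanSum_prime_pow [CharZero K] {p : ℕ} (hp : p.Prime) (x k : ℕ) :
    ∑ i ∈ range (k + 1), ramanujanSum K x (p ^ i) = idOnDivisors K x (p ^ k) := by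
  induction k with
  | zero => simp [ramanujanSum_of_dvd, idOnDivisors_apply]
  | succ k ih =>
    rw [sum_range_succ, ih, idOnDivisors_apply, idOnDivisors_apply]
    by_cases hk' : p ^ (k + 1) ∣ x
    · have hk : p ^ k ∣ x := (pow_dvd_pow p k.le_succ).trans hk'
      rw [if_pos hk, if_pos hk', ramanujanSum_of_dvd hk', Nat.totient_prime_pow_succ hp]
      push_cast [Nat.cast_sub hp.one_le]
      ring
    by_cases hk : p ^ k ∣ x
    · rw [if_pos hk, if_neg hk', ramanujanSum_prime_pow_succ_of_dvd_of_not_dvd hp hk hk']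
      push_cast
      ring
    · rw [if_neg hk, if_neg hk', ramanujanSum_prime_pow_succ_of_not_dvd hp hk, add_zero]

theorem ramanujanSum_mul_zeta [CharZero K] (x : ℕ) : ramanujanSum K x * ζ = idOnDivisors K x := by
  rw [IsMultiplicative.eq_iff_eq_on_prime_powers _
    ((isMultiplicative_ramanujanSum x).mul isMultiplicative_zeta.natCast) _
    (isMultiplicative_idOnDivisors x)]
  intro p k hp
  rw [coe_mul_zeta_apply, Nat.sum_divisors_prime_pow hp, sum_range_ramanujanSum_prime_pow hp]

end RamanujanSum

theorem sigma_eq_sum_harmonic_moebius_totient_general (α : ℂ) (x : ℕ) :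
    ∑ d ∈ x.divisors, (d : ℂ) ^ α =
      ∑ d ∈ Finset.Icc 1 x,
        genHarmonic (x / d) (1 - α) * (d : ℂ) ^ (α - 1) *
          (ArithmeticFunction.moebius (d / Nat.gcd d x) : ℂ) *
          ((Nat.totient d : ℂ) / (Nat.totient (d / Nat.gcd d x) : ℂ)) := by
  have hsummand (d : ℕ) : genHarmonic (x / d) (1 - α) * (d : ℂ) ^ (α - 1) *
      (μ (d / d.gcd x) : ℂ) * ((φ d : ℂ) / (φ (d / d.gcd x) : ℂ)) =
      ∑ k ∈ Icc 1 (x / d), ((d * k : ℕ) : ℂ) ^ (α - 1) * ramanujanSum ℂ x d := by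
    simp only [genHarmonic, neg_sub, sum_mul, Nat.cast_mul, Complex.natCast_mul_natCast_cpow,
      ramanujanSum_apply]
    exact sum_congr rfl fun k _ => by ring
  have hdivisor {n : ℕ} (hn : n ∈ Icc 1 x) :
      ∑ d ∈ n.divisors, (n : ℂ) ^ (α - 1) * ramanujanSum ℂ x d =
        if n ∣ x then (n : ℂ) ^ α else 0 := by
    have hn0 : (n : ℂ) ≠ 0 := Nat.cast_ne_zero.mpr (by simp at hn; omega)
    rw [← mul_sum, ← coe_mul_zeta_apply, ramanujanSum_mul_zeta, idOnDivisors_apply]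
    split_ifs
    · rw [Complex.cpow_sub _ _ hn0, Complex.cpow_one, div_mul_cancel₀ _ hn0]
    · rw [mul_zero]
  simp only [hsummand]
  rw [← Nat.sum_Icc_sum_divisors x fun d n => (n : ℂ) ^ (α - 1) * ramanujanSum ℂ x d,
    sum_congr rfl fun n hn => hdivisor hn, ← sum_filter, Nat.divisors,
    ← Ico_add_one_right_eq_Icc]

theorem sigma_eq_sum_harmonic_moebius_totient (α : ℂ) (x : ℕ) (hx : 0 < x) :
    ∑ d ∈ x.divisors, (d : ℂ) ^ α =
      ∑ d ∈ Finset.Icc 1 x,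
        genHarmonic (x / d) (1 - α) * (d : ℂ) ^ (α - 1) *
          (ArithmeticFunction.moebius (d / Nat.gcd d x) : ℂ) *
          ((Nat.totient d : ℂ) / (Nat.totient (d / Nat.gcd d x) : ℂ)) :=
  sigma_eq_sum_harmonic_moebius_totient_general α x
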